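/- For all natural numbers n and k with k ≤ n, the k-th derivative of the Legendre polynomial of degree n equals (∏_{j=0}^{k−1} (2n−1−2j)) · P_{n−k}(x) plus a real linear combination of the Legendre polynomials P_{n−k−2}, P_{n−k−4}, …, i.e., d^k/dx^k P_n − (2n−1)(2n−3)⋯(2n−2k+1) · P_{n−k} lies in the real span of {P_{n−k−2i} : 1 ≤ i ≤ ⌊(n−k)/2⌋}. -/

import Mathlib

/-!
Differentiating `(X² - 1)^(n+2)` twice gives
`(2n+4) ((2n+3) (X² - 1)^(n+1) + (2n+2) (X² - 1)^n)`, and applying `D^(n+1)` with Rodrigues'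
normalisation turns this into the recurrence `P'_(n+2) = (2n+3) P_(n+1) + P'_n`.  Hence `P'_m` is a
combination of `P_(m-1), P_(m-3), …`, and `P'_(m+1) - (2m+1) P_m` one of `P_(m-2), P_(m-4), …`.
By induction on `k`, each further derivative of `P_n` multiplies the coefficient of the top
Legendre polynomial `P_(n-k)` by `2(n-k)-1 = 2n-1-2k` and keeps the remainder in the span of the
lower ones of the same parity.
-/

/-- Legendre polynomial via Rodrigues' formula. -/
noncomputable def legendre (n : ℕ) : ℝ → ℝ :=
  fun x => (1 / (2 ^ n * (n.factorial : ℝ))) * iteratedDeriv n (fun y => (y ^ 2 - 1) ^ n) x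

open Finset

namespace Polynomial

section CommRing

variable {R : Type*} [CommRing R]

theorem derivative_X_sq_sub_one_pow_succ (n : ℕ) :
    derivative (((X : R[X]) ^ 2 - 1) ^ (n + 1)) =
      C (2 * (n + 1) : R) * (X * (X ^ 2 - 1) ^ n) := by
  rw [derivative_pow_succ]
  simp only [derivative_sub, derivative_X_pow, derivative_one, map_mul, map_add, map_ofNat,
    map_natCast, map_one]
  ring

theorem derivative_derivative_X_sq_sub_one_pow (n : ℕ) :
    derivative (derivative (((X : R[X]) ^ 2 - 1) ^ (n + 2))) =
      C (2 * n + 4 : R) * (C (2 * n + 3 : R) * (X ^ 2 - 1) ^ (n + 1) +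
        C (2 * n + 2 : R) * (X ^ 2 - 1) ^ n) := by
  rw [derivative_X_sq_sub_one_pow_succ, derivative_C_mul, derivative_mul, derivative_X,
    derivative_X_sq_sub_one_pow_succ]
  simp only [map_mul, map_add, map_ofNat, map_natCast, map_one, Nat.cast_add, Nat.cast_one]
  ring

end CommRing

section Field

variable (K : Type*) [Field K]

noncomputable def legendrePoly (n : ℕ) : K[X] :=
  C (2 ^ n * n.factorial : K)⁻¹ * derivative^[n] ((X ^ 2 - 1) ^ n)

noncomputable def legendreSpanBelow (m : ℕ) : Submodule K K[X] :=
  Submodule.span K (legendrePoly K '' {j | j < m ∧ j % 2 = m % 2})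

variable {K}

theorem legendrePoly_mem_legendreSpanBelow {j m : ℕ} (hjm : j < m) (hpar : j % 2 = m % 2) :
    legendrePoly K j ∈ legendreSpanBelow K m :=
  Submodule.subset_span ⟨j, ⟨hjm, hpar⟩, rfl⟩

theorem legendreSpanBelow_mono {a b : ℕ} (hab : a ≤ b) (hpar : a % 2 = b % 2) :
    legendreSpanBelow K a ≤ legendreSpanBelow K b :=
  Submodule.span_mono <| Set.image_mono fun _ ⟨hj, hjpar⟩ => ⟨by omega, by omega⟩

theorem derivative_legendrePoly_zero : derivative (legendrePoly K 0) = 0 := by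
  simp [legendrePoly]

variable [CharZero K]

theorem derivative_legendrePoly_one : derivative (legendrePoly K 1) = legendrePoly K 0 := by
  have h : C (2 : K)⁻¹ * C 2 = 1 := by
    rw [← C_mul, inv_mul_cancel₀ two_ne_zero, C_1]
  simpa [legendrePoly, one_add_one_eq_two] using h

theorem inv_two_pow_mul_factorial_succ_mul (n : ℕ) :
    (2 ^ (n + 1) * (n + 1).factorial : K)⁻¹ * (2 * (n + 1)) = (2 ^ n * n.factorial : K)⁻¹ := by
  have hfac : (n.factorial : K) ≠ 0 := Nat.cast_ne_zero.mpr n.factorial_ne_zero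
  have hn1 : (n + 1 : K) ≠ 0 := Nat.cast_add_one_ne_zero n
  push_cast [Nat.factorial_succ]
  field_simp
  ring

theorem derivative_legendrePoly_add_two (n : ℕ) :
    derivative (legendrePoly K (n + 2)) =
      (2 * n + 3 : K) • legendrePoly K (n + 1) + derivative (legendrePoly K n) := by
  have hc₁ := inv_two_pow_mul_factorial_succ_mul (K := K) (n + 1)
  have hc₀ := inv_two_pow_mul_factorial_succ_mul (K := K) n
  push_cast at hc₁
  have h1 : C (2 ^ (n + 2) * (n + 2).factorial : K)⁻¹ * C (2 * n + 4 : K) * C (2 * n + 3 : K) =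
      C (2 * n + 3 : K) * C (2 ^ (n + 1) * (n + 1).factorial : K)⁻¹ := by
    simp only [← C_mul]
    congr 1
    linear_combination (2 * n + 3 : K) * hc₁
  have h2 : C (2 ^ (n + 2) * (n + 2).factorial : K)⁻¹ * C (2 * n + 4 : K) * C (2 * n + 2 : K) =
      C (2 ^ n * n.factorial : K)⁻¹ := by
    simp only [← C_mul]
    congr 1
    linear_combination (2 * n + 2 : K) * hc₁ + hc₀
  simp only [legendrePoly, derivative_C_mul, smul_eq_C_mul, ← Function.iterate_succ_apply']
  rw [Function.iterate_succ_apply, Function.iterate_succ_apply,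
    derivative_derivative_X_sq_sub_one_pow, iterate_derivative_C_mul, iterate_map_add,
    iterate_derivative_C_mul, iterate_derivative_C_mul]
  linear_combination derivative^[n + 1] ((X ^ 2 - 1) ^ (n + 1)) * h1 +
    derivative^[n + 1] ((X ^ 2 - 1) ^ n) * h2

theorem derivative_legendrePoly_mem : ∀ m : ℕ,
    derivative (legendrePoly K m) ∈ legendreSpanBelow K (m + 1)
  | 0 => by
    rw [derivative_legendrePoly_zero]
    exact Submodule.zero_mem _
  | 1 => by
    rw [derivative_legendrePoly_one]
    exact legendrePoly_mem_legendreSpanBelow (by omega) (by omega)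
  | m + 2 => by
    rw [derivative_legendrePoly_add_two]
    refine Submodule.add_mem _ (Submodule.smul_mem _ _ ?_) ?_
    · exact legendrePoly_mem_legendreSpanBelow (by omega) (by omega)
    · exact legendreSpanBelow_mono (by omega) (by omega) (derivative_legendrePoly_mem m)

theorem derivative_legendrePoly_succ_sub_mem (m : ℕ) :
    derivative (legendrePoly K (m + 1)) - (2 * m + 1 : K) • legendrePoly K m ∈
      legendreSpanBelow K m := by
  cases m with
  | zero =>
    simp [derivative_legendrePoly_one]
  | succ m =>
    rw [derivative_legendrePoly_add_two, Nat.cast_succ,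
      show (2 * ((m : K) + 1) + 1) = 2 * m + 3 by ring, add_sub_cancel_left]
    exact derivative_legendrePoly_mem m

theorem derivative_mem_legendreSpanBelow {m : ℕ} {p : K[X]}
    (hp : p ∈ legendreSpanBelow K (m + 1)) :
    derivative p ∈ legendreSpanBelow K m := by
  refine (Submodule.span_le (p := (legendreSpanBelow K m).comap derivative)).mpr ?_ hp
  rintro _ ⟨j, ⟨hj, hjpar⟩, rfl⟩
  exact legendreSpanBelow_mono (by omega) (by omega) (derivative_legendrePoly_mem j)

theorem iterate_derivative_legendrePoly_sub_mem (m k : ℕ) :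
    derivative^[k] (legendrePoly K (m + k)) -
        (∏ j ∈ range k, (2 * ((m + k : ℕ) : K) - 1 - 2 * j)) • legendrePoly K m ∈
      legendreSpanBelow K m := by
  induction k generalizing m with
  | zero => simp
  | succ k ih =>
    set c := ∏ j ∈ range k, (2 * ((m + 1 + k : ℕ) : K) - 1 - 2 * j)
    have hprod : ∏ j ∈ range (k + 1), (2 * ((m + (k + 1) : ℕ) : K) - 1 - 2 * j) =
        c * (2 * m + 1) := by
      rw [prod_range_succ, show m + (k + 1) = m + 1 + k by omega]
      congr 1
      push_cast
      ring
    have hsplit : derivative^[k + 1] (legendrePoly K (m + (k + 1))) -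
          (c * (2 * m + 1)) • legendrePoly K m =
        derivative (derivative^[k] (legendrePoly K (m + 1 + k)) - c • legendrePoly K (m + 1)) +
          c • (derivative (legendrePoly K (m + 1)) - (2 * m + 1 : K) • legendrePoly K m) := by
      rw [Function.iterate_succ_apply', derivative_sub, derivative_smul, smul_sub, mul_smul,
        show m + (k + 1) = m + 1 + k by omega]
      abel
    rw [hprod, hsplit]
    exact Submodule.add_mem _ (derivative_mem_legendreSpanBelow (ih (m + 1)))
      (Submodule.smul_mem _ _ (derivative_legendrePoly_succ_sub_mem m))

end Field

end Polynomial

open Polynomial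

theorem iteratedDeriv_eval {𝕜 : Type*} [NontriviallyNormedField 𝕜] (k : ℕ) (p : 𝕜[X]) :
    iteratedDeriv k (fun x => p.eval x) = fun x => (derivative^[k] p).eval x := by
  induction k generalizing p with
  | zero => simp
  | succ k ih =>
    have hderiv : deriv (fun x => p.eval x) = fun x => (derivative p).eval x :=
      funext fun _ => p.deriv
    rw [iteratedDeriv_succ', hderiv, ih, Function.iterate_succ_apply]

theorem legendre_eq_eval_legendrePoly (n : ℕ) :
    legendre n = fun x => (legendrePoly ℝ n).eval x := by
  have h := iteratedDeriv_eval n (((X : ℝ[X]) ^ 2 - 1) ^ n)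
  simp only [eval_pow, eval_sub, eval_X, eval_one] at h
  ext x
  simp [legendre, legendrePoly, h]

theorem iteratedDeriv_legendre (k n : ℕ) :
    iteratedDeriv k (legendre n) = fun x => (derivative^[k] (legendrePoly ℝ n)).eval x := by
  rw [legendre_eq_eval_legendrePoly, iteratedDeriv_eval]

theorem setOf_legendre_sub_two_mul_eq_image (m : ℕ) :
    {g : ℝ → ℝ | ∃ i : ℕ, 1 ≤ i ∧ i ≤ m / 2 ∧ g = legendre (m - 2 * i)} =
      legendre '' {j | j < m ∧ j % 2 = m % 2} := by
  ext g
  constructor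
  · rintro ⟨i, hi, him, rfl⟩
    exact ⟨m - 2 * i, ⟨by omega, by omega⟩, rfl⟩
  · rintro ⟨j, ⟨hjm, hpar⟩, rfl⟩
    exact ⟨(m - j) / 2, by omega, by omega, by congr 1; omega⟩

theorem legendre_iteratedDeriv_leading_coeff (n k : ℕ) (hk : k ≤ n) :
    iteratedDeriv k (legendre n) -
        (∏ j ∈ Finset.range k, (2 * (n : ℝ) - 1 - 2 * j)) • legendre (n - k) ∈
      Submodule.span ℝ
        {g : ℝ → ℝ | ∃ i : ℕ, 1 ≤ i ∧ i ≤ (n - k) / 2 ∧ g = legendre (n - k - 2 * i)} := by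
  obtain ⟨m, rfl⟩ := Nat.exists_eq_add_of_le' hk
  let evalFun : ℝ[X] →ₗ[ℝ] ℝ → ℝ := LinearMap.pi fun x => leval x
  have heval : evalFun ∘ legendrePoly ℝ = legendre :=
    funext fun j => (legendre_eq_eval_legendrePoly j).symm
  have hmem := Submodule.mem_map_of_mem (f := evalFun) (iterate_derivative_legendrePoly_sub_mem m k)
  rw [legendreSpanBelow, Submodule.map_span, ← Set.image_comp, heval, map_sub, map_smul] at hmem
  rw [Nat.add_sub_cancel, setOf_legendre_sub_two_mul_eq_image, iteratedDeriv_legendre,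
    legendre_eq_eval_legendrePoly m]
  exact hmem
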